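/- (Recovery guarantee for ZD-GroTh, Proposition 1) Let y = Σ_{j∈U} A_j x_j + n with nonempty sets U of used blocks and N of unused blocks, blocks A_i of full column rank satisfying ‖(A_i^H A_i)^{-1/2} A_i^H‖_2 ≤ 1, block mutual coherence μ_B > 0, σ_min = min_i σ_min(A_i), and ‖x_min‖_2 = min_{j∈U} ‖x_j‖_2 > 0. If (Σ_{j∈U} ‖x_j‖_2)/‖x_min‖_2 < (1/2)(σ_min/μ_B + 1) − ‖n‖_2/(μ_B ‖x_min‖_2), then min_{i∈N} ‖(A_i^H A_i)^{-1/2} A_i^H y‖_2 < min_{j∈U} ‖(A_j^H A_j)^{-1/2} A_j^H y‖_2; consequently any index achieving the global minimum of the correlation ‖(A_i^H A_i)^{-1/2} A_i^H y‖_2 over i ∈ {1,...,B} belongs to N, i.e., ZD-GroTh identifies an unused block. -/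

import Mathlib

open Matrix Finset
open scoped ComplexOrder

noncomputable section
open scoped Classical

def enorm2 {n : ℕ} (v : Fin n → ℂ) : ℝ := ‖(WithLp.equiv 2 (Fin n → ℂ)).symm v‖

def snorm {m n : ℕ} (A : Matrix (Fin m) (Fin n) ℂ) : ℝ :=
  ‖LinearMap.toContinuousLinearMap (Matrix.toEuclideanLin A)‖

/-- The positive semidefinite square root of a positive semidefinite matrix
(the former `Matrix.PosSemidef.sqrt`, spelled out). -/
def psdSqrt {n : ℕ} {M : Matrix (Fin n) (Fin n) ℂ} (hA : M.PosSemidef) :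
    Matrix (Fin n) (Fin n) ℂ :=
  hA.1.eigenvectorUnitary.1 * diagonal ((↑) ∘ (√·) ∘ hA.1.eigenvalues) *
  (star hA.1.eigenvectorUnitary : Matrix (Fin n) (Fin n) ℂ)

def invSqrt {n : ℕ} (M : Matrix (Fin n) (Fin n) ℂ) : Matrix (Fin n) (Fin n) ℂ :=
  if h : M.PosSemidef then (psdSqrt h)⁻¹ else 0

def msqrt {n : ℕ} (M : Matrix (Fin n) (Fin n) ℂ) : Matrix (Fin n) (Fin n) ℂ :=
  if h : M.PosSemidef then psdSqrt h else 0

/-- normalized correlation ‖(AᴴA)^{-1/2} Aᴴ r‖₂ -/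
def ncorr {m k : ℕ} (A : Matrix (Fin m) (Fin k) ℂ) (r : Fin m → ℂ) : ℝ :=
  enorm2 ((invSqrt (Aᴴ * A) * Aᴴ).mulVec r)

end

/-! Write `P_i = (A_iᴴ A_i)^{-1/2} A_iᴴ`, so the correlation of block `i` is `‖P_i y‖`.
Since `P_i A_i = (A_iᴴ A_i)^{1/2}` and `‖(A_iᴴ A_i)^{1/2} v‖ = ‖A_i v‖`, the own-block term
of a used block has norm at least `σ_min ‖x_i‖`, while every other block passes with gain at
most `μ_B` and the noise with gain at most `1`. With `S = Σ_{j∈U} ‖x_j‖`, an unused block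
therefore correlates at most `μ_B S + ‖n‖` and a used block `j` at least
`σ_min ‖x_j‖ - μ_B (S - ‖x_j‖) - ‖n‖`; the hypothesis on `S / ‖x_min‖` is exactly
`2 (μ_B S + ‖n‖) < (σ_min + μ_B) ‖x_min‖`, which separates the two. -/

lemma psdSqrt_mul_self {k : ℕ} {M : Matrix (Fin k) (Fin k) ℂ} (hM : M.PosSemidef) :
    psdSqrt hM * psdSqrt hM = M := by
  set U : Matrix (Fin k) (Fin k) ℂ := (hM.1.eigenvectorUnitary : Matrix (Fin k) (Fin k) ℂ)
  have hU : star U * U = 1 := Unitary.coe_star_mul_self _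
  have hD : diagonal ((↑) ∘ (√·) ∘ hM.1.eigenvalues) *
      diagonal ((↑) ∘ (√·) ∘ hM.1.eigenvalues) =
      diagonal (RCLike.ofReal ∘ hM.1.eigenvalues : Fin k → ℂ) := by
    rw [diagonal_mul_diagonal]
    congr 1
    funext i
    simp only [Function.comp_apply]
    rw [← Complex.ofReal_mul, Real.mul_self_sqrt (hM.eigenvalues_nonneg i)]
    rfl
  conv_rhs => rw [hM.1.spectral_theorem, Unitary.conjStarAlgAut_apply]
  calc psdSqrt hM * psdSqrt hM
      = U * (diagonal ((↑) ∘ (√·) ∘ hM.1.eigenvalues) * (star U * U) *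
          diagonal ((↑) ∘ (√·) ∘ hM.1.eigenvalues)) * star U := by
        simp only [psdSqrt, U, Matrix.mul_assoc]
    _ = _ := by rw [hU, Matrix.mul_one, hD]

lemma psdSqrt_isHermitian {k : ℕ} {M : Matrix (Fin k) (Fin k) ℂ} (hM : M.PosSemidef) :
    (psdSqrt hM).IsHermitian := by
  have hdiag : star ((↑) ∘ (√·) ∘ hM.1.eigenvalues : Fin k → ℂ) =
      (↑) ∘ (√·) ∘ hM.1.eigenvalues := by
    funext i
    simp
  rw [IsHermitian, psdSqrt, conjTranspose_mul, conjTranspose_mul, diagonal_conjTranspose, hdiag,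
    Matrix.mul_assoc]
  simp [Matrix.star_eq_conjTranspose]

lemma invSqrt_mul_self {k : ℕ} {M : Matrix (Fin k) (Fin k) ℂ} (hM : M.PosDef) :
    invSqrt M * M = psdSqrt hM.posSemidef := by
  set S := psdSqrt hM.posSemidef
  have hsq : S * S = M := psdSqrt_mul_self hM.posSemidef
  have hdet : S.det * S.det ≠ 0 := by
    rw [← det_mul, hsq]
    exact hM.det_pos.ne'
  calc invSqrt M * M = S⁻¹ * (S * S) := by rw [invSqrt, dif_pos hM.posSemidef, hsq]
    _ = S := nonsing_inv_mul_cancel_left _ _ (isUnit_iff_ne_zero.mpr (left_ne_zero_of_mul hdet))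

lemma enorm2_eq_norm_toLp {k : ℕ} (v : Fin k → ℂ) : enorm2 v = ‖WithLp.toLp 2 v‖ := rfl

lemma enorm2_nonneg {k : ℕ} (v : Fin k → ℂ) : 0 ≤ enorm2 v := norm_nonneg _

lemma enorm2_add_le {k : ℕ} (v w : Fin k → ℂ) : enorm2 (v + w) ≤ enorm2 v + enorm2 w :=
  norm_add_le _ _

lemma enorm2_sub_le_enorm2_add {k : ℕ} (v w : Fin k → ℂ) :
    enorm2 v - enorm2 w ≤ enorm2 (v + w) := by
  simpa [enorm2_eq_norm_toLp] using norm_sub_norm_le (WithLp.toLp 2 v) (-WithLp.toLp 2 w)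

lemma enorm2_sum_le {ι : Type*} {k : ℕ} (s : Finset ι) (f : ι → Fin k → ℂ) :
    enorm2 (∑ j ∈ s, f j) ≤ ∑ j ∈ s, enorm2 (f j) := by
  simpa only [enorm2_eq_norm_toLp, WithLp.toLp_sum] using
    norm_sum_le s fun j ↦ WithLp.toLp 2 (f j)

lemma enorm2_mulVec_le {m k : ℕ} (S : Matrix (Fin m) (Fin k) ℂ) (v : Fin k → ℂ) :
    enorm2 (S *ᵥ v) ≤ snorm S * enorm2 v := by
  simpa [enorm2, snorm] using
    (LinearMap.toContinuousLinearMap (toEuclideanLin S)).le_opNorm (WithLp.toLp 2 v)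

lemma sq_enorm2_mulVec {m k : ℕ} (S : Matrix (Fin m) (Fin k) ℂ) (v : Fin k → ℂ) :
    enorm2 (S *ᵥ v) ^ 2 = (star v ⬝ᵥ (Sᴴ * S) *ᵥ v).re := by
  rw [← mulVec_mulVec, dotProduct_mulVec, ← star_mulVec, enorm2_eq_norm_toLp,
    @norm_sq_eq_re_inner ℂ, EuclideanSpace.inner_toLp_toLp, dotProduct_comm]
  rfl

lemma enorm2_mulVec_eq_of_conjTranspose_mul_self_eq {m m' k : ℕ} {S : Matrix (Fin m) (Fin k) ℂ}
    {S' : Matrix (Fin m') (Fin k) ℂ} (h : Sᴴ * S = S'ᴴ * S') (v : Fin k → ℂ) :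
    enorm2 (S *ᵥ v) = enorm2 (S' *ᵥ v) := by
  rw [← sq_eq_sq₀ (enorm2_nonneg _) (enorm2_nonneg _), sq_enorm2_mulVec, sq_enorm2_mulVec, h]

lemma enorm2_psdSqrt_mulVec {m k : ℕ} (A : Matrix (Fin m) (Fin k) ℂ)
    (h : (Aᴴ * A).PosSemidef) (v : Fin k → ℂ) :
    enorm2 (psdSqrt h *ᵥ v) = enorm2 (A *ᵥ v) :=
  enorm2_mulVec_eq_of_conjTranspose_mul_self_eq
    (by rw [(psdSqrt_isHermitian h).eq, psdSqrt_mul_self]) v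

section ncorr

variable {m k : ℕ} (A : Matrix (Fin m) (Fin k) ℂ)

lemma ncorr_add_le (u v : Fin m → ℂ) : ncorr A (u + v) ≤ ncorr A u + ncorr A v := by
  simpa only [ncorr, mulVec_add] using enorm2_add_le _ _

lemma ncorr_sub_le_ncorr_add (u v : Fin m → ℂ) : ncorr A u - ncorr A v ≤ ncorr A (u + v) := by
  simpa only [ncorr, mulVec_add] using enorm2_sub_le_enorm2_add _ _

lemma ncorr_sum_le {ι : Type*} (s : Finset ι) (f : ι → Fin m → ℂ) :
    ncorr A (∑ j ∈ s, f j) ≤ ∑ j ∈ s, ncorr A (f j) := by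
  simpa only [ncorr, mulVec_sum] using enorm2_sum_le _ _

lemma ncorr_le (r : Fin m → ℂ) : ncorr A r ≤ snorm (invSqrt (Aᴴ * A) * Aᴴ) * enorm2 r :=
  enorm2_mulVec_le _ _

lemma ncorr_mulVec_le {k' : ℕ} (A' : Matrix (Fin m) (Fin k') ℂ) (v : Fin k' → ℂ) :
    ncorr A (A' *ᵥ v) ≤ snorm (invSqrt (Aᴴ * A) * (Aᴴ * A')) * enorm2 v := by
  simpa only [ncorr, mulVec_mulVec, Matrix.mul_assoc] using enorm2_mulVec_le _ v

lemma ncorr_mulVec_self (hA : (Aᴴ * A).PosDef) (v : Fin k → ℂ) :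
    ncorr A (A *ᵥ v) = enorm2 (A *ᵥ v) := by
  rw [ncorr, mulVec_mulVec, Matrix.mul_assoc, invSqrt_mul_self hA, enorm2_psdSqrt_mulVec]

end ncorr

section blocks

variable {ι : Type*} {m : ℕ} {k : ι → ℕ} (A : (i : ι) → Matrix (Fin m) (Fin (k i)) ℂ)
  (x : (i : ι) → Fin (k i) → ℂ) (n : Fin m → ℂ) (s : Finset ι) {μ : ℝ}

lemma ncorr_sum_mulVec_add_le (i : ι)
    (hμ : ∀ j ∈ s, snorm (invSqrt ((A i)ᴴ * A i) * ((A i)ᴴ * A j)) ≤ μ)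
    (hnorm : snorm (invSqrt ((A i)ᴴ * A i) * (A i)ᴴ) ≤ 1) :
    ncorr (A i) (∑ j ∈ s, A j *ᵥ x j + n) ≤ μ * ∑ j ∈ s, enorm2 (x j) + enorm2 n := by
  have hsignal : ncorr (A i) (∑ j ∈ s, A j *ᵥ x j) ≤ μ * ∑ j ∈ s, enorm2 (x j) := by
    rw [Finset.mul_sum]
    refine (ncorr_sum_le _ _ _).trans (Finset.sum_le_sum fun j hj ↦ ?_)
    exact (ncorr_mulVec_le _ _ _).trans (mul_le_mul_of_nonneg_right (hμ j hj) (enorm2_nonneg _))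
  have hnoise : ncorr (A i) n ≤ enorm2 n :=
    (ncorr_le _ n).trans (mul_le_of_le_one_left (enorm2_nonneg _) hnorm)
  exact (ncorr_add_le _ _ _).trans (add_le_add hsignal hnoise)

lemma sub_le_ncorr_sum_mulVec_add_of_mem [DecidableEq ι] {σ : ℝ} {i : ι} (hi : i ∈ s)
    (hA : ((A i)ᴴ * A i).PosDef)
    (hσ : ∀ v, σ * enorm2 v ≤ enorm2 (A i *ᵥ v))
    (hμ : ∀ j ∈ s, j ≠ i → snorm (invSqrt ((A i)ᴴ * A i) * ((A i)ᴴ * A j)) ≤ μ)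
    (hnorm : snorm (invSqrt ((A i)ᴴ * A i) * (A i)ᴴ) ≤ 1) :
    σ * enorm2 (x i) - (μ * ∑ j ∈ s.erase i, enorm2 (x j) + enorm2 n)
      ≤ ncorr (A i) (∑ j ∈ s, A j *ᵥ x j + n) := by
  have hcross := ncorr_sum_mulVec_add_le A x n (s.erase i) i
    (fun j hj ↦ hμ j (Finset.mem_of_mem_erase hj) (Finset.ne_of_mem_erase hj)) hnorm
  rw [← Finset.add_sum_erase s _ hi, add_assoc]
  calc σ * enorm2 (x i) - (μ * ∑ j ∈ s.erase i, enorm2 (x j) + enorm2 n)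
      ≤ ncorr (A i) (A i *ᵥ x i) - ncorr (A i) (∑ j ∈ s.erase i, A j *ᵥ x j + n) := by
        rw [ncorr_mulVec_self _ hA]
        exact sub_le_sub (hσ _) hcross
    _ ≤ _ := ncorr_sub_le_ncorr_add _ _ _

lemma ncorr_lt_of_notMem_of_mem [DecidableEq ι] {σ : ℝ} {i j : ι} (hi : i ∉ s) (hj : j ∈ s)
    (hA : ((A j)ᴴ * A j).PosDef) (hσ : ∀ v, σ * enorm2 v ≤ enorm2 (A j *ᵥ v))
    (hμ : ∀ a b, a ≠ b → snorm (invSqrt ((A a)ᴴ * A a) * ((A a)ᴴ * A b)) ≤ μ)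
    (hnorm : ∀ a, snorm (invSqrt ((A a)ᴴ * A a) * (A a)ᴴ) ≤ 1)
    (hgap : 2 * (μ * ∑ l ∈ s, enorm2 (x l) + enorm2 n) < (σ + μ) * enorm2 (x j)) :
    ncorr (A i) (∑ l ∈ s, A l *ᵥ x l + n) < ncorr (A j) (∑ l ∈ s, A l *ᵥ x l + n) := by
  have hunused := ncorr_sum_mulVec_add_le A x n s i
    (fun l hl ↦ hμ i l fun h ↦ hi (h ▸ hl)) (hnorm i)
  have hused := sub_le_ncorr_sum_mulVec_add_of_mem A x n s hj hA hσ
    (fun l _ hl ↦ hμ j l hl.symm) (hnorm j)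
  rw [Finset.sum_erase_eq_sub hj] at hused
  linarith

end blocks

theorem zdgroth_recovery_guarantee_general
    {M B : ℕ} {Ni : Fin B → ℕ}
    (A : (i : Fin B) → Matrix (Fin M) (Fin (Ni i)) ℂ)
    (x : (i : Fin B) → Fin (Ni i) → ℂ)
    (n : Fin M → ℂ) (U N : Finset (Fin B))
    (hrank : ∀ i, ((A i)ᴴ * A i).PosDef)
    (hN : N.Nonempty)
    (hcompl : ∀ i, i ∈ N ↔ i ∉ U)
    (μB σmin xmin : ℝ)
    (hμpos : 0 < μB)
    (hμ : ∀ i j, i ≠ j → snorm (invSqrt ((A i)ᴴ * A i) * ((A i)ᴴ * A j)) ≤ μB)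
    (hσ : ∀ i, ∀ v : Fin (Ni i) → ℂ, σmin * enorm2 v ≤ enorm2 ((A i).mulVec v))
    (hxmin_le : ∀ j ∈ U, xmin ≤ enorm2 (x j))
    (hxmin_pos : 0 < xmin)
    (hnorm : ∀ i, snorm (invSqrt ((A i)ᴴ * A i) * (A i)ᴴ) ≤ 1)
    (y : Fin M → ℂ)
    (hy : y = (∑ j ∈ U, (A j).mulVec (x j)) + n)
    (hcond : (∑ j ∈ U, enorm2 (x j)) / xmin
        < (1 / 2) * (σmin / μB + 1) - enorm2 n / (μB * xmin)) :
    (∃ i ∈ N, ∀ j ∈ U, ncorr (A i) y < ncorr (A j) y) ∧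
      (∀ f : Fin B, (∀ k : Fin B, ncorr (A f) y ≤ ncorr (A k) y) → f ∈ N) := by
  have hgap : 2 * (μB * ∑ j ∈ U, enorm2 (x j) + enorm2 n) < (σmin + μB) * xmin := by
    have h := mul_lt_mul_of_pos_right hcond (mul_pos (mul_pos two_pos hμpos) hxmin_pos)
    field_simp at h
    linarith
  have hσμ : 0 < σmin + μB := by
    have hS : 0 ≤ ∑ j ∈ U, enorm2 (x j) := Finset.sum_nonneg fun j _ ↦ enorm2_nonneg _
    nlinarith [enorm2_nonneg n]
  have hcmp : ∀ i ∈ N, ∀ j ∈ U, ncorr (A i) y < ncorr (A j) y := fun i hi j hj ↦ by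
    subst hy
    exact ncorr_lt_of_notMem_of_mem A x n U ((hcompl i).mp hi) hj (hrank j) (hσ j) hμ hnorm
      (hgap.trans_le (mul_le_mul_of_nonneg_left (hxmin_le j hj) hσμ.le))
  obtain ⟨i, hi⟩ := hN
  refine ⟨⟨i, hi, hcmp i hi⟩, fun f hf ↦ ?_⟩
  by_contra hfN
  have hfU : f ∈ U := not_not.mp ((hcompl f).not.mp hfN)
  exact (hf i).not_gt (hcmp i hi f hfU)

/-- Proposition 1: recovery guarantee for ZD-GroTh. -/
theorem zdgroth_recovery_guarantee
    {M B : ℕ} {Ni : Fin B → ℕ}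
    (A : (i : Fin B) → Matrix (Fin M) (Fin (Ni i)) ℂ)
    (x : (i : Fin B) → Fin (Ni i) → ℂ)
    (n : Fin M → ℂ) (U N : Finset (Fin B))
    (hrank : ∀ i, ((A i)ᴴ * A i).PosDef)
    (hU : U.Nonempty) (hN : N.Nonempty)
    (hcompl : ∀ i, i ∈ N ↔ i ∉ U)
    (μB σmin xmin : ℝ)
    (hμpos : 0 < μB)
    (hμ : ∀ i j, i ≠ j → snorm (invSqrt ((A i)ᴴ * A i) * ((A i)ᴴ * A j)) ≤ μB)
    (hσ : ∀ i, ∀ v : Fin (Ni i) → ℂ, σmin * enorm2 v ≤ enorm2 ((A i).mulVec v))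
    (hxmin_le : ∀ j ∈ U, xmin ≤ enorm2 (x j))
    (hxmin_mem : ∃ j ∈ U, enorm2 (x j) = xmin)
    (hxmin_pos : 0 < xmin)
    (hnorm : ∀ i, snorm (invSqrt ((A i)ᴴ * A i) * (A i)ᴴ) ≤ 1)
    (y : Fin M → ℂ)
    (hy : y = (∑ j ∈ U, (A j).mulVec (x j)) + n)
    (hcond : (∑ j ∈ U, enorm2 (x j)) / xmin
        < (1 / 2) * (σmin / μB + 1) - enorm2 n / (μB * xmin)) :
    (∃ i ∈ N, ∀ j ∈ U, ncorr (A i) y < ncorr (A j) y) ∧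
      (∀ f : Fin B, (∀ k : Fin B, ncorr (A f) y ≤ ncorr (A k) y) → f ∈ N) :=
  zdgroth_recovery_guarantee_general A x n U N hrank hN hcompl μB σmin xmin hμpos hμ hσ hxmin_le
    hxmin_pos hnorm y hy hcond
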